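/- arXiv:1911.08658 — 6 statements merged into one kernel-verified Lean document; each statement's English description precedes it below -/
import Mathlib

section
/- Let Σ be a finite-dimensional real vector space with non-degenerate bilinear form B of symmetry type σ, and let E ∈ End(Σ) satisfy E^t = σE. Suppose E ∘ E = tr(E) E and there exists A ∈ End(Σ) with E ∘ A ∘ E = tr(E ∘ A) E and tr(E ∘ A) ≠ 0. Then rk(E) = 1. -/
/-!
Rescaling `E ∘ A` by `c = tr(E ∘ A)` gives a projection `P = c⁻¹ • (E ∘ A)`: the identity
`E A E = c E` makes `P` idempotent and forces `range P = range E`. The trace of a projection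
is the dimension of its range, so `rk E = tr P = c⁻¹ tr(E ∘ A) = 1`.
-/

namespace LinearMap

variable {K V : Type*} [Field K] [AddCommGroup V] [Module K V]

theorem isIdempotentElem_inv_smul_comp_of_comp_comp_eq_smul {E A : V →ₗ[K] V} {c : K}
    (hc : c ≠ 0) (h : E ∘ₗ A ∘ₗ E = c • E) : IsIdempotentElem (c⁻¹ • (E ∘ₗ A)) := by
  have hEAE : E * A * E = c • E := by rw [mul_assoc]; exact h
  change c⁻¹ • (E * A) * (c⁻¹ • (E * A)) = c⁻¹ • (E * A)
  rw [smul_mul_smul_comm, ← mul_assoc, hEAE, smul_mul_assoc, smul_smul, mul_assoc,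
    inv_mul_cancel₀ hc, mul_one]

theorem range_comp_eq_range_of_comp_comp_eq_smul {E A : V →ₗ[K] V} {c : K}
    (hc : c ≠ 0) (h : E ∘ₗ A ∘ₗ E = c • E) : range (E ∘ₗ A) = range E := by
  refine le_antisymm (range_comp_le_range A E) ?_
  calc range E = range (E ∘ₗ A ∘ₗ E) := by rw [h, range_smul E c hc]
    _ ≤ range (E ∘ₗ A) := range_comp_le_range E (E ∘ₗ A)

theorem mul_finrank_range_eq_trace_of_comp_comp_eq_smul [FiniteDimensional K V]
    {E A : V →ₗ[K] V} {c : K} (hc : c ≠ 0) (h : E ∘ₗ A ∘ₗ E = c • E) :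
    c * Module.finrank K (range E) = trace K V (E ∘ₗ A) := by
  have hP := isIdempotentElem_inv_smul_comp_of_comp_comp_eq_smul hc h
  calc c * Module.finrank K (range E)
      = c * Module.finrank K (range (c⁻¹ • (E ∘ₗ A))) := by
        rw [range_smul _ _ (inv_ne_zero hc), range_comp_eq_range_of_comp_comp_eq_smul hc h]
    _ = c * trace K V (c⁻¹ • (E ∘ₗ A)) := by rw [(IsIdempotentElem.isProj_range _ hP).trace]
    _ = trace K V (E ∘ₗ A) := by rw [map_smul, smul_eq_mul, mul_inv_cancel_left₀ hc]

end LinearMap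

theorem stmt_5_general (S : Type*) [AddCommGroup S] [Module ℝ S] [FiniteDimensional ℝ S]
    (E : S →ₗ[ℝ] S)
    (A : S →ₗ[ℝ] S)
    (hA : E ∘ₗ A ∘ₗ E = (LinearMap.trace ℝ S (E ∘ₗ A)) • E)
    (htr : LinearMap.trace ℝ S (E ∘ₗ A) ≠ 0) :
    Module.finrank ℝ (LinearMap.range E) = 1 := by
  have h := LinearMap.mul_finrank_range_eq_trace_of_comp_comp_eq_smul htr hA
  exact_mod_cast mul_eq_left₀ htr |>.mp h

/-- if `E^t = σE`, `E ∘ E = tr(E) E` and there is `A` with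
`E ∘ A ∘ E = tr(E ∘ A) E` and `tr(E ∘ A) ≠ 0`, then `E` has rank one. -/
theorem stmt_5 (S : Type*) [AddCommGroup S] [Module ℝ S] [FiniteDimensional ℝ S]
    (B : S →ₗ[ℝ] S →ₗ[ℝ] ℝ)
    (hBnd : ∀ x : S, (∀ y : S, B x y = 0) → x = 0)
    (σ : ℝ) (hσ : σ = 1 ∨ σ = -1)
    (hsym : ∀ x y : S, B x y = σ * B y x)
    (E : S →ₗ[ℝ] S)
    (hadj : ∀ x y : S, B x (E y) = σ * B (E x) y)
    (hsq : E ∘ₗ E = (LinearMap.trace ℝ S E) • E)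
    (A : S →ₗ[ℝ] S)
    (hA : E ∘ₗ A ∘ₗ E = (LinearMap.trace ℝ S (E ∘ₗ A)) • E)
    (htr : LinearMap.trace ℝ S (E ∘ₗ A) ≠ 0) :
    Module.finrank ℝ (LinearMap.range E) = 1 :=
  stmt_5_general S E A hA htr
end

section
/- Let Σ be a finite-dimensional real vector space with non-degenerate bilinear form B of symmetry type σ, and E ∈ End(Σ) nonzero with E^t = σE. Then E has rank one and is B-admissible if and only if E ∘ A ∘ E = tr(E ∘ A) E holds for every endomorphism A ∈ End(Σ). -/
open Module LinearMap

/-- trace of a rank-one map `x ↦ g x • v` is `g v`. -/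
lemma trace_smulRight_aux {S : Type*} [AddCommGroup S] [Module ℝ S] [FiniteDimensional ℝ S]
    (g : S →ₗ[ℝ] ℝ) (v : S) :
    LinearMap.trace ℝ S (g.smulRight v) = g v := by
  have h1 : g.smulRight v = (LinearMap.toSpanSingleton ℝ S v) ∘ₗ g := by
    ext x; simp [LinearMap.toSpanSingleton]
  rw [h1, LinearMap.trace_comp_comm']
  have h2 : g ∘ₗ LinearMap.toSpanSingleton ℝ S v
      = (g v) • (LinearMap.id : ℝ →ₗ[ℝ] ℝ) := by
    ext; simp [LinearMap.toSpanSingleton, mul_comm]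
  rw [h2, map_smul, LinearMap.trace_id, Module.finrank_self]
  simp


/-- for a nonzero `σ`-symmetric endomorphism `E`, being `B`-admissible of
rank one is equivalent to `E ∘ A ∘ E = tr(E ∘ A) E` for every endomorphism `A`. -/
theorem stmt_6 (S : Type*) [AddCommGroup S] [Module ℝ S] [FiniteDimensional ℝ S]
    (hdim : 2 ≤ Module.finrank ℝ S)
    (B : S →ₗ[ℝ] S →ₗ[ℝ] ℝ)
    (hBnd : ∀ x : S, (∀ y : S, B x y = 0) → x = 0)
    (σ : ℝ) (hσ : σ = 1 ∨ σ = -1)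
    (hsym : ∀ x y : S, B x y = σ * B y x)
    (E : S →ₗ[ℝ] S) (hE0 : E ≠ 0)
    (hadj : ∀ x y : S, B x (E y) = σ * B (E x) y) :
    (Module.finrank ℝ (LinearMap.range E) = 1 ∧
        E ∘ₗ E = (LinearMap.trace ℝ S E) • E) ↔
      ∀ A : S →ₗ[ℝ] S, E ∘ₗ A ∘ₗ E = (LinearMap.trace ℝ S (E ∘ₗ A)) • E := by
  -- a nonzero vector in the range of `E`
  obtain ⟨x0, hx0⟩ : ∃ x0 : S, E x0 ≠ 0 := by
    by_contra hc
    push_neg at hc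
    exact hE0 (LinearMap.ext fun x => by simpa using hc x)
  set v : S := E x0 with hv
  have hvr : v ∈ LinearMap.range E := ⟨x0, rfl⟩
  have hspan_le : Submodule.span ℝ {v} ≤ LinearMap.range E := by
    rw [Submodule.span_singleton_le_iff_mem]; exact hvr
  constructor
  · rintro ⟨hrk, -⟩ A
    -- range E = span {v}
    have hrange : LinearMap.range E = Submodule.span ℝ {v} := by
      refine (Submodule.eq_of_le_of_finrank_le hspan_le ?_).symm
      rw [hrk, finrank_span_singleton hx0]
    -- a functional with f v = 1
    obtain ⟨f0, hf0⟩ : ∃ f0 : S →ₗ[ℝ] ℝ, f0 v ≠ 0 := by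
      by_contra hc
      push_neg at hc
      exact hx0 ((Module.forall_dual_apply_eq_zero_iff ℝ v).mp hc)
    set f : S →ₗ[ℝ] ℝ := (f0 v)⁻¹ • f0 with hf
    have hfv : f v = 1 := by simp [hf, inv_mul_cancel₀ hf0]
    -- E x = f (E x) • v for all x
    have key : ∀ x : S, E x = f (E x) • v := by
      intro x
      have : E x ∈ Submodule.span ℝ ({v} : Set S) := hrange ▸ LinearMap.mem_range_self E x
      obtain ⟨c, hc⟩ := Submodule.mem_span_singleton.mp this
      rw [← hc, map_smul, smul_eq_mul, hfv, mul_one]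
    have hEA : E ∘ₗ A = (f ∘ₗ E ∘ₗ A).smulRight v := by
      ext z
      simp only [LinearMap.comp_apply, LinearMap.smulRight_apply]
      exact key (A z)
    rw [hEA, trace_smulRight_aux]
    ext x
    simp only [LinearMap.comp_apply, LinearMap.smul_apply]
    rw [key (A (E x)), key x]
    simp only [map_smul, smul_eq_mul, smul_smul]
    ring_nf
  · intro h
    refine ⟨?_, by simpa using h LinearMap.id⟩
    -- rank one: range E ≤ span {v}
    have hle : LinearMap.range E ≤ Submodule.span ℝ {v} := by
      rintro - ⟨x, rfl⟩
      by_contra hmem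
      obtain ⟨f, hfx, hfv⟩ :=
        Submodule.exists_dual_map_eq_bot_of_notMem hmem inferInstance
      have hfv' : f v = 0 := by
        have : f v ∈ Submodule.map f (Submodule.span ℝ {v}) :=
          ⟨v, Submodule.mem_span_singleton_self v, rfl⟩
        rw [hfv] at this
        simpa using this
      -- E = 0, contradiction
      apply hE0
      ext y
      -- A := z ↦ ((f z) * (f (E x))⁻¹) • y
      set A : S →ₗ[ℝ] S := ((f (E x))⁻¹ • f).smulRight y with hA
      have hAEx : A (E x) = y := by
        simp [hA, inv_mul_cancel₀ hfx]
      have hAv : A v = 0 := by simp [hA, hfv']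
      have h1 := congrArg (fun g => g x) (h A)
      have h2 := congrArg (fun g => g x0) (h A)
      simp only [LinearMap.comp_apply, LinearMap.smul_apply] at h1 h2
      rw [hAEx] at h1
      rw [show E x0 = v from rfl, hAv, map_zero] at h2
      have hc0 : LinearMap.trace ℝ S (E ∘ₗ A) = 0 := by
        by_contra hc
        exact hx0 (by simpa using (smul_eq_zero.mp h2.symm).resolve_left hc)
      rw [hc0, zero_smul] at h1
      simpa using h1
    rw [le_antisymm hle hspan_le]
    exact finrank_span_singleton hx0
end

section
/- Let Σ be a finite-dimensional real vector space with non-degenerate bilinear form B of symmetry type σ, B' a non-degenerate symmetric bilinear form on Σ with operator A relative to B (i.e. B' = B(-, A-)), and E ∈ End(Σ). Then E ∘ A is B'-admissible (i.e. (EA)∘(EA) = tr(EA)·(EA) and (EA)^T = EA for the B'-adjoint) if and only if E^t = σE and E ∘ A ∘ E = tr(E ∘ A)·E. -/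
/-- with `B'(x,y) = B(x, A y)` for an invertible operator `A`, the
endomorphism `E ∘ A` is `B'`-admissible iff `E^t = σ E` and
`E ∘ A ∘ E = tr(E ∘ A) E`. -/
theorem stmt_9 (S : Type*) [AddCommGroup S] [Module ℝ S] [FiniteDimensional ℝ S]
    (B B' : S →ₗ[ℝ] S →ₗ[ℝ] ℝ)
    (σ : ℝ) (hσ : σ = 1 ∨ σ = -1)
    (hsym : ∀ x y : S, B x y = σ * B y x)
    (hBnd : ∀ x : S, (∀ y : S, B x y = 0) → x = 0)
    (hB'sym : ∀ x y : S, B' x y = B' y x)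
    (A : S →ₗ[ℝ] S) (hAbij : Function.Bijective A)
    (hA : ∀ x y : S, B' x y = B x (A y))
    (E : S →ₗ[ℝ] S) :
    ((E ∘ₗ A) ∘ₗ (E ∘ₗ A) = (LinearMap.trace ℝ S (E ∘ₗ A)) • (E ∘ₗ A) ∧
        ∀ x y : S, B' x ((E ∘ₗ A) y) = B' ((E ∘ₗ A) x) y) ↔
      ((∀ x y : S, B x (E y) = σ * B (E x) y) ∧
        E ∘ₗ A ∘ₗ E = (LinearMap.trace ℝ S (E ∘ₗ A)) • E) := by
  obtain ⟨hAinj, hAsurj⟩ := hAbij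
  have hσ2 : σ * σ = 1 := by rcases hσ with h | h <;> simp [h]
  constructor
  · rintro ⟨h1, h2⟩
    constructor
    · intro x y
      obtain ⟨x', rfl⟩ := hAsurj x
      obtain ⟨y', rfl⟩ := hAsurj y
      have e1 := h2 x' y'
      simp only [LinearMap.comp_apply] at e1
      calc B (A x') (E (A y')) = σ * B (E (A y')) (A x') := hsym _ _
        _ = σ * B' (E (A y')) x' := by rw [← hA]
        _ = σ * B' x' (E (A y')) := by rw [hB'sym]
        _ = σ * B' (E (A x')) y' := by rw [e1]
        _ = σ * B (E (A x')) (A y') := by rw [hA]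
    · ext x
      obtain ⟨z, rfl⟩ := hAsurj x
      have := LinearMap.congr_fun h1 z
      simpa using this
  · rintro ⟨h1, h2⟩
    refine ⟨?_, ?_⟩
    · calc (E ∘ₗ A) ∘ₗ (E ∘ₗ A) = (E ∘ₗ A ∘ₗ E) ∘ₗ A := by
            ext x; simp
        _ = ((LinearMap.trace ℝ S (E ∘ₗ A)) • E) ∘ₗ A := by rw [h2]
        _ = (LinearMap.trace ℝ S (E ∘ₗ A)) • (E ∘ₗ A) := by rw [LinearMap.smul_comp]
    · intro x y
      simp only [LinearMap.comp_apply]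
      calc B' x (E (A y)) = B' (E (A y)) x := hB'sym _ _
        _ = B (E (A y)) (A x) := hA _ _
        _ = σ * B (A x) (E (A y)) := hsym _ _
        _ = σ * (σ * B (E (A x)) (A y)) := by rw [h1]
        _ = B (E (A x)) (A y) := by rw [← mul_assoc, hσ2, one_mul]
        _ = B' (E (A x)) y := (hA _ _).symm
end

section
/- Let (V*, h*) be a 2-dimensional Lorentzian quadratic space of signature (1,1). A polyform α ∈ ∧V* satisfies τ(α) = α and α ⋄ α = 2 α⁽⁰⁾ α if and only if α = α⁽⁰⁾ + α⁽¹⁾ with (α⁽⁰⁾)² = h*(α⁽¹⁾, α⁽¹⁾); in particular α⁽¹⁾ is spacelike or null. -/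
/-- A polyform on a 2-dimensional quadratic space with orthonormal basis `e¹, e²`
(`h*(e¹,e¹) = 1`, `h*(e²,e²) = ε`), encoded as its components
`(α⁽⁰⁾, coefficient of e¹, coefficient of e², coefficient of e¹∧e²)`. -/
abbrev Polyform2 := ℝ × ℝ × ℝ × ℝ

/-- The geometric (Kähler-Atiyah) product on polyforms of a 2-dimensional quadratic
space with `e¹⋄e¹ = 1`, `e²⋄e² = ε`, determined by `θ ⋄ α = θ ∧ α + ι_{θ♯} α`. -/
def gprod2 (ε : ℝ) (α β : Polyform2) : Polyform2 :=
  (α.1 * β.1 + α.2.1 * β.2.1 + ε * α.2.2.1 * β.2.2.1 - ε * α.2.2.2 * β.2.2.2,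
   α.1 * β.2.1 + α.2.1 * β.1 - ε * α.2.2.1 * β.2.2.2 + ε * α.2.2.2 * β.2.2.1,
   α.1 * β.2.2.1 + α.2.2.1 * β.1 + α.2.1 * β.2.2.2 - α.2.2.2 * β.2.1,
   α.1 * β.2.2.2 + α.2.2.2 * β.1 + α.2.1 * β.2.2.1 - α.2.2.1 * β.2.1)

/-- The reversal anti-automorphism `τ`, acting as `(-1)^{k(k-1)/2}` in degree `k`. -/
def tau2 (α : Polyform2) : Polyform2 := (α.1, α.2.1, α.2.2.1, -α.2.2.2)

/-- in the Lorentzian signature (1,1) case (`e¹` spacelike, `e²`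
timelike, i.e. `ε = -1`), a polyform `α` satisfies `τ(α) = α` and
`α ⋄ α = 2 α⁽⁰⁾ α` iff `α = α⁽⁰⁾ + α⁽¹⁾` with `(α⁽⁰⁾)² = h*(α⁽¹⁾, α⁽¹⁾)`;
in particular `α⁽¹⁾` is spacelike or null. -/
theorem stmt_13 (α : Polyform2) :
    (tau2 α = α ∧ gprod2 (-1) α α = (2 * α.1) • α) ↔
      (α.2.2.2 = 0 ∧ α.1 ^ 2 = α.2.1 ^ 2 - α.2.2.1 ^ 2 ∧
        0 ≤ α.2.1 ^ 2 - α.2.2.1 ^ 2) := by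
  obtain ⟨a, b, c, d⟩ := α
  simp only [tau2, gprod2, Prod.ext_iff, Prod.smul_mk, smul_eq_mul]
  constructor
  · rintro ⟨⟨-, -, -, hd⟩, h1, -, -, -⟩
    have hd0 : d = 0 := by linarith
    subst hd0
    refine ⟨rfl, by nlinarith, by nlinarith⟩
  · rintro ⟨hd, h1, -⟩
    subst hd
    refine ⟨⟨trivial, trivial, trivial, by ring⟩, by nlinarith, by ring, by ring, by ring⟩
end

section
/- Let (V*, h*) be a 4-dimensional Minkowski space of signature (3,1). The map sending a parabolic pair (u,l) to the 2-plane spanned by u and l induces a bijection between weak equivalence classes of parabolic pairs of one-forms and the set of parabolic 2-planes in V*. (A 2-plane Π is parabolic if the restriction of h* to Π has one-dimensional kernel.) -/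
/-- The Minkowski bilinear form of "mostly plus" signature (3,1) on `ℝ⁴`. -/
def minkB : (Fin 4 → ℝ) →ₗ[ℝ] (Fin 4 → ℝ) →ₗ[ℝ] ℝ :=
  LinearMap.mk₂ ℝ (fun x y => x 0 * y 0 + x 1 * y 1 + x 2 * y 2 - x 3 * y 3)
    (by intro m₁ m₂ n; simp only [Pi.add_apply]; ring)
    (by intro c m n; simp only [Pi.smul_apply, smul_eq_mul]; ring)
    (by intro m n₁ n₂; simp only [Pi.add_apply]; ring)
    (by intro c m n; simp only [Pi.smul_apply, smul_eq_mul]; ring)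

/-- The kernel (radical) of the restriction of a bilinear form `B` to a subspace `W`. -/
def radical (B : (Fin 4 → ℝ) →ₗ[ℝ] (Fin 4 → ℝ) →ₗ[ℝ] ℝ)
    (W : Submodule ℝ (Fin 4 → ℝ)) : Submodule ℝ (Fin 4 → ℝ) where
  carrier := {x | x ∈ W ∧ ∀ y ∈ W, B x y = 0}
  add_mem' := by
    rintro a b ⟨haW, ha⟩ ⟨hbW, hb⟩
    exact ⟨W.add_mem haW hbW, fun y hy => by
      simp only [map_add, LinearMap.add_apply, ha y hy, hb y hy, add_zero]⟩
  zero_mem' := ⟨W.zero_mem, fun y hy => by simp⟩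
  smul_mem' := by
    rintro c a ⟨haW, ha⟩
    exact ⟨W.smul_mem c haW, fun y hy => by
      simp only [map_smul, LinearMap.smul_apply, ha y hy, smul_zero]⟩

/-- A parabolic pair of one-forms: `u ≠ 0` null, `l` spacelike of unit norm,
`u ⊥ l`. -/
def ParaPair (u l : Fin 4 → ℝ) : Prop :=
  u ≠ 0 ∧ minkB u u = 0 ∧ minkB l l = 1 ∧ minkB u l = 0

/-- Weak equivalence of parabolic pairs: `u' = b u`, `l' = η l + c u` with
`b ≠ 0`, `η = ±1`. -/
def WeakEquiv (u l u' l' : Fin 4 → ℝ) : Prop :=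
  ∃ (b c η : ℝ), b ≠ 0 ∧ (η = 1 ∨ η = -1) ∧ u' = b • u ∧ l' = η • l + c • u

/-- A parabolic 2-plane: a 2-dimensional subspace on which the restriction of the
Minkowski metric has one-dimensional kernel. -/
def IsParabolicPlane (P : Submodule ℝ (Fin 4 → ℝ)) : Prop :=
  Module.finrank ℝ P = 2 ∧ Module.finrank ℝ (radical minkB P) = 1

lemma minkB_apply (x y : Fin 4 → ℝ) :
    minkB x y = x 0 * y 0 + x 1 * y 1 + x 2 * y 2 - x 3 * y 3 := rfl

lemma minkB_symm (x y : Fin 4 → ℝ) : minkB x y = minkB y x := by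
  simp only [minkB_apply]; ring

lemma range_pair (u l : Fin 4 → ℝ) : Set.range ![u, l] = {u, l} := by
  exact Matrix.range_cons_cons_empty u l _

lemma pos_aux (u v : Fin 4 → ℝ) (hu0 : u ≠ 0) (huu : minkB u u = 0)
    (huv : minkB u v = 0) (hvv : minkB v v ≠ 0) : 0 < minkB v v := by
  rcases lt_or_gt_of_ne hvv with hneg | hpos
  · exfalso
    simp only [minkB_apply] at huu huv hneg
    by_cases h3 : u 3 = 0
    · apply hu0
      have h0 : u 0 = 0 ∧ u 1 = 0 ∧ u 2 = 0 := by
        constructor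
        · nlinarith [sq_nonneg (u 0), sq_nonneg (u 1), sq_nonneg (u 2)]
        constructor
        · nlinarith [sq_nonneg (u 0), sq_nonneg (u 1), sq_nonneg (u 2)]
        · nlinarith [sq_nonneg (u 0), sq_nonneg (u 1), sq_nonneg (u 2)]
      funext i
      fin_cases i <;> simp [h0.1, h0.2.1, h0.2.2, h3]
    · have hD : u 3 * v 3 = u 0 * v 0 + u 1 * v 1 + u 2 * v 2 := by linarith
      have hS : u 3 * u 3 = u 0 * u 0 + u 1 * u 1 + u 2 * u 2 := by linarith
      have hP : 0 < (u 3 * u 3) * (v 3 * v 3 - (v 0 * v 0 + v 1 * v 1 + v 2 * v 2)) :=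
        mul_pos (mul_self_pos.2 h3) (by linarith)
      have key : (u 0 * v 1 - u 1 * v 0) ^ 2 + (u 0 * v 2 - u 2 * v 0) ^ 2
          + (u 1 * v 2 - u 2 * v 1) ^ 2
          = (u 0 * u 0 + u 1 * u 1 + u 2 * u 2) * (v 0 * v 0 + v 1 * v 1 + v 2 * v 2)
            - (u 0 * v 0 + u 1 * v 1 + u 2 * v 2) ^ 2 := by ring
      have hnn : 0 ≤ (u 0 * v 1 - u 1 * v 0) ^ 2 + (u 0 * v 2 - u 2 * v 0) ^ 2
          + (u 1 * v 2 - u 2 * v 1) ^ 2 := by positivity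
      have hD2 : (u 3 * v 3) ^ 2 = (u 0 * v 0 + u 1 * v 1 + u 2 * v 2) ^ 2 := by rw [hD]
      have hS2 : (u 3 * u 3) * (v 0 * v 0 + v 1 * v 1 + v 2 * v 2)
          = (u 0 * u 0 + u 1 * u 1 + u 2 * u 2) * (v 0 * v 0 + v 1 * v 1 + v 2 * v 2) := by
        rw [hS]
      linarith [key, hnn, hD2, hS2, hP]
  · exact hpos

lemma minkB_comb (a b : ℝ) (u l y : Fin 4 → ℝ) :
    minkB (a • u + b • l) y = a * minkB u y + b * minkB l y := by
  simp [map_add, map_smul]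

lemma minkB_comb' (a b : ℝ) (u l y : Fin 4 → ℝ) :
    minkB y (a • u + b • l) = a * minkB y u + b * minkB y l := by
  simp [map_add, map_smul]

lemma pair_indep {u l : Fin 4 → ℝ} (h : ParaPair u l) : LinearIndependent ℝ ![u, l] := by
  obtain ⟨hu0, huu, hll, hul⟩ := h
  rw [LinearIndependent.pair_iff]
  intro s t hst
  have ht : t = 0 := by
    have := congrArg (fun z => minkB z l) hst
    simpa [minkB_comb, huu, hll, hul] using this
  subst ht
  refine ⟨?_, rfl⟩
  rw [zero_smul, add_zero] at hst
  exact (smul_eq_zero.1 hst).resolve_right hu0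

lemma span_pair_finrank {u l : Fin 4 → ℝ} (h : LinearIndependent ℝ ![u, l]) :
    Module.finrank ℝ (Submodule.span ℝ ({u, l} : Set (Fin 4 → ℝ))) = 2 := by
  have := finrank_span_eq_card h
  rwa [Matrix.range_cons_cons_empty, Fintype.card_fin] at this

lemma mem_radical {B W x} : x ∈ radical B W ↔ x ∈ W ∧ ∀ y ∈ W, B x y = 0 := Iff.rfl

lemma radical_span_pair {u l : Fin 4 → ℝ} (h : ParaPair u l) :
    radical minkB (Submodule.span ℝ ({u, l} : Set (Fin 4 → ℝ)))
      = Submodule.span ℝ ({u} : Set (Fin 4 → ℝ)) := by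
  obtain ⟨hu0, huu, hll, hul⟩ := h
  apply le_antisymm
  · intro x hx
    obtain ⟨hxW, hx0⟩ := mem_radical.1 hx
    obtain ⟨a, b, rfl⟩ := Submodule.mem_span_pair.1 hxW
    have hb : b = 0 := by
      have := hx0 l (Submodule.subset_span (by simp))
      simpa [minkB_comb, huu, hll, hul] using this
    subst hb
    simp only [zero_smul, add_zero]
    exact Submodule.smul_mem _ a (Submodule.mem_span_singleton_self u)
  · rw [Submodule.span_le, Set.singleton_subset_iff]
    refine mem_radical.2 ⟨Submodule.subset_span (by simp), fun y hy => ?_⟩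
    obtain ⟨a, b, rfl⟩ := Submodule.mem_span_pair.1 hy
    have hlu : minkB l u = 0 := (minkB_symm l u).trans hul
    simp [minkB_comb', huu, hul]

theorem part1 (u l : Fin 4 → ℝ) (h : ParaPair u l) :
    IsParabolicPlane (Submodule.span ℝ {u, l}) :=
  ⟨span_pair_finrank (pair_indep h), by
    rw [radical_span_pair h]; exact finrank_span_singleton h.1⟩

theorem part2 (u l u' l' : Fin 4 → ℝ) (h : ParaPair u l) (h' : ParaPair u' l') :
    WeakEquiv u l u' l' ↔
      Submodule.span ℝ ({u, l} : Set (Fin 4 → ℝ)) =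
        Submodule.span ℝ ({u', l'} : Set (Fin 4 → ℝ)) := by
  obtain ⟨hu0, huu, hll, hul⟩ := h
  have hlu : minkB l u = 0 := (minkB_symm l u).trans hul
  constructor
  · rintro ⟨b, c, η, hb, hη, hu', hl'⟩
    have hηη : η * η = 1 := by rcases hη with rfl | rfl <;> norm_num
    have hη0 : η ≠ 0 := by rcases hη with rfl | rfl <;> norm_num
    apply le_antisymm <;> rw [Submodule.span_le] <;>
      intro x hx <;> rcases hx with rfl | hx
    · refine Submodule.mem_span_pair.2 ⟨b⁻¹, 0, ?_⟩
      rw [hu']; rw [zero_smul, add_zero, smul_smul, inv_mul_cancel₀ hb, one_smul]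
    · rcases hx with rfl
      refine Submodule.mem_span_pair.2 ⟨-(η * c * b⁻¹), η, ?_⟩
      rw [hu', hl', smul_add, smul_smul, smul_smul, smul_smul]
      rw [hηη, one_smul, show -(η * c * b⁻¹) * b = -(η * c) by field_simp, neg_smul]
      abel
    · refine Submodule.mem_span_pair.2 ⟨b, 0, ?_⟩
      rw [hu', zero_smul, add_zero]
    · rcases hx with rfl
      refine Submodule.mem_span_pair.2 ⟨c, η, ?_⟩
      rw [hl', add_comm]
  · intro hspan
    obtain ⟨hu'0, hu'u', hl'l', hu'l'⟩ := h'
    have hu'mem : u' ∈ Submodule.span ℝ ({u, l} : Set (Fin 4 → ℝ)) := by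
      rw [hspan]; exact Submodule.subset_span (by simp)
    have hl'mem : l' ∈ Submodule.span ℝ ({u, l} : Set (Fin 4 → ℝ)) := by
      rw [hspan]; exact Submodule.subset_span (by simp)
    obtain ⟨b, d, hbd⟩ := Submodule.mem_span_pair.1 hu'mem
    obtain ⟨c, η, hcη⟩ := Submodule.mem_span_pair.1 hl'mem
    have hd : d = 0 := by
      have : minkB u' u' = d * d := by
        rw [← hbd]; simp [minkB_comb, minkB_comb', huu, hul, hlu, hll]
      rw [hu'u'] at this
      exact mul_self_eq_zero.1 this.symm
    subst hd
    rw [zero_smul, add_zero] at hbd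
    have hb : b ≠ 0 := by
      rintro rfl; rw [zero_smul] at hbd; exact hu'0 hbd.symm
    have hη : η * η = 1 := by
      have : minkB l' l' = η * η := by
        rw [← hcη]; simp [minkB_comb, minkB_comb', huu, hul, hlu, hll]
      rw [hl'l'] at this
      exact this.symm
    exact ⟨b, c, η, hb, mul_self_eq_one_iff.1 hη, hbd.symm, by rw [← hcη, add_comm]⟩

theorem part3 (P : Submodule ℝ (Fin 4 → ℝ)) (hP : IsParabolicPlane P) :
    ∃ u l : Fin 4 → ℝ, ParaPair u l ∧
      P = Submodule.span ℝ ({u, l} : Set (Fin 4 → ℝ)) := by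
  obtain ⟨h2, h1⟩ := hP
  have hRbot : radical minkB P ≠ ⊥ := by
    intro h; rw [h, finrank_bot] at h1; norm_num at h1
  obtain ⟨u, huR, hu0⟩ := Submodule.exists_mem_ne_zero_of_ne_bot hRbot
  obtain ⟨huP, huO⟩ := mem_radical.1 huR
  have huu : minkB u u = 0 := huO u huP
  have hPle : ¬ P ≤ Submodule.span ℝ ({u} : Set (Fin 4 → ℝ)) := by
    intro hle
    have := Submodule.finrank_mono (t := Submodule.span ℝ ({u} : Set (Fin 4 → ℝ))) hle
    rw [h2, finrank_span_singleton hu0] at this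
    norm_num at this
  obtain ⟨v, hvP, hvu⟩ := SetLike.not_le_iff_exists.1 hPle
  have hindep : LinearIndependent ℝ ![u, v] := by
    rw [LinearIndependent.pair_iff' hu0]
    intro a ha
    exact hvu (ha ▸ Submodule.smul_mem _ a (Submodule.mem_span_singleton_self u))
  have hspanP : Submodule.span ℝ ({u, v} : Set (Fin 4 → ℝ)) = P := by
    apply Submodule.eq_of_le_of_finrank_eq
    · rw [Submodule.span_le]; rintro x (rfl | hx)
      · exact huP
      · rcases hx with rfl; exact hvP
    · rw [span_pair_finrank hindep, h2]
  have huv : minkB u v = 0 := huO v hvP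
  have hvu' : minkB v u = 0 := (minkB_symm v u).trans huv
  have hvv : minkB v v ≠ 0 := by
    intro h0
    have hvR : v ∈ radical minkB P := by
      refine mem_radical.2 ⟨hvP, fun y hy => ?_⟩
      rw [← hspanP] at hy
      obtain ⟨a, b, rfl⟩ := Submodule.mem_span_pair.1 hy
      simp [minkB_comb', hvu', h0]
    have hle : Submodule.span ℝ ({u, v} : Set (Fin 4 → ℝ)) ≤ radical minkB P := by
      rw [Submodule.span_le]; rintro x (rfl | hx)
      · exact huR
      · rcases hx with rfl; exact hvR
    have := Submodule.finrank_mono hle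
    rw [span_pair_finrank hindep, h1] at this
    norm_num at this
  have hpos : 0 < minkB v v := pos_aux u v hu0 huu huv hvv
  set s : ℝ := Real.sqrt (minkB v v) with hs
  have hspos : 0 < s := Real.sqrt_pos.2 hpos
  have hss : s * s = minkB v v := Real.mul_self_sqrt hpos.le
  refine ⟨u, s⁻¹ • v, ⟨hu0, huu, ?_, ?_⟩, ?_⟩
  · simp only [map_smul, LinearMap.smul_apply, smul_eq_mul]
    rw [← hss]; field_simp
  · simp only [map_smul, smul_eq_mul, huv, mul_zero]
  · rw [← hspanP]
    apply le_antisymm <;> rw [Submodule.span_le] <;> rintro x (rfl | hx)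
    · exact Submodule.subset_span (by simp)
    · rcases hx with rfl
      refine Submodule.mem_span_pair.2 ⟨0, s, ?_⟩
      rw [zero_smul, zero_add, smul_smul, mul_inv_cancel₀ hspos.ne', one_smul]
    · exact Submodule.subset_span (by simp)
    · rcases hx with rfl
      exact Submodule.mem_span_pair.2 ⟨0, s⁻¹, by rw [zero_smul, zero_add]⟩

/-- `(u,l) ↦ span{u,l}` induces a bijection between weak equivalence
classes of parabolic pairs of one-forms and parabolic 2-planes in Minkowski space:
it is well defined and both injective and surjective on classes. -/
theorem stmt_15 :
    (∀ u l : Fin 4 → ℝ, ParaPair u l →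
        IsParabolicPlane (Submodule.span ℝ {u, l})) ∧
      (∀ u l u' l' : Fin 4 → ℝ, ParaPair u l → ParaPair u' l' →
        (WeakEquiv u l u' l' ↔
          Submodule.span ℝ ({u, l} : Set (Fin 4 → ℝ)) =
            Submodule.span ℝ ({u', l'} : Set (Fin 4 → ℝ)))) ∧
      (∀ P : Submodule ℝ (Fin 4 → ℝ), IsParabolicPlane P →
        ∃ u l : Fin 4 → ℝ, ParaPair u l ∧
          P = Submodule.span ℝ ({u, l} : Set (Fin 4 → ℝ))) :=
  ⟨part1, part2, part3⟩
end

section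
/- Let (V, h) be an even-dimensional quadratic real vector space of signature p - q ≡ 0, 2 (mod 8), γ : Cl(V*,h*) → End(Σ) an irreducible real Clifford representation, and B an admissible pairing on Σ of adjoint type s and symmetry type σ. If α ∈ ∧V* is a signed square of a spinor, i.e. Ψ_γ(α) = ±ξ ⊗ ξ* for some ξ ∈ Σ, and k ∈ {1,...,d} satisfies (-1)^{k(1-s)/2} (-1)^{k(k-1)/2} = -σ, then the degree-k component α⁽ᵏ⁾ vanishes. -/
/-!
Write `α = equivExterior Q x`. Because `γ x = ±ξ ⊗ B(·, ξ)` is a rank-one map built from a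
`σ`-symmetric form, it is `σ`-self-adjoint; admissibility says its adjoint is
`γ ((π^{(1-s)/2} ∘ τ) x)`, so nondegeneracy and injectivity of `γ` give
`(π^{(1-s)/2} ∘ τ) x = σ • x`. The linear isomorphism `Cl(Q) ≃ ∧V` intertwines `π` and `τ` with
their exterior-algebra counterparts, which act on `∧^n V` by `(-1)^{n(1-s)/2} (-1)^{n(n-1)/2}`.
Hence `α` is a `σ`-eigenvector of an operator acting on `∧^k V` by `-σ ≠ σ`, and `α⁽ᵏ⁾ = 0`.
-/

noncomputable instance : Invertible (2 : ℝ) := invertibleOfNonzero two_ne_zero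

namespace CliffordAlgebra

variable {R M : Type*} [CommRing R] [AddCommGroup M] [Module R M]
  {Q Q' : QuadraticForm R M} {B : LinearMap.BilinForm R M}

theorem involute_contractLeft (d : Module.Dual R M) (x : CliffordAlgebra Q) :
    involute (contractLeft d x) = -contractLeft d (involute x) := by
  induction x using CliffordAlgebra.left_induction with
  | algebraMap => simp [contractLeft_algebraMap]
  | add _ _ ha hb => simp only [map_add, ha, hb, neg_add]
  | ι_mul _ _ hx =>
    simp only [contractLeft_ι_mul, map_sub, map_smul, map_mul, involute_ι, map_neg, hx,
      mul_neg, neg_mul, neg_neg, neg_sub]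

theorem contractLeft_mul_ι (d : Module.Dual R M) (m : M) (x : CliffordAlgebra Q) :
    contractLeft d (x * ι Q m) = contractLeft d x * ι Q m + d m • involute x := by
  induction x using CliffordAlgebra.left_induction with
  | algebraMap r =>
    simp [contractLeft_algebraMap_mul, contractLeft_ι, contractLeft_algebraMap,
      Algebra.smul_def, ← map_mul, mul_comm]
  | add _ _ ha hb =>
    simp only [add_mul, map_add, ha, hb, smul_add]
    abel
  | ι_mul y v hy =>
    rw [mul_assoc, contractLeft_ι_mul, contractLeft_ι_mul, hy]
    simp only [map_mul, involute_ι, mul_add, neg_mul, sub_mul, smul_mul_assoc, mul_smul_comm,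
      mul_assoc, smul_neg]
    abel

theorem contractRight_ι_mul (d : Module.Dual R M) (m : M) (x : CliffordAlgebra Q) :
    contractRight (ι Q m * x) d = ι Q m * contractRight x d + d m • involute x := by
  rw [contractRight_eq, reverse.map_mul, reverse_ι, contractLeft_mul_ι, map_add,
    reverse.map_mul, reverse_ι, map_smul, ← contractRight_eq, reverse_involute, reverse_reverse]

theorem contractRight_contractLeft (d d' : Module.Dual R M) (x : CliffordAlgebra Q) :
    contractRight (contractLeft d x) d' = contractLeft d (contractRight x d') := by
  induction x using CliffordAlgebra.left_induction with
  | algebraMap => simp [contractRight_algebraMap, contractLeft_algebraMap]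
  | add _ _ ha hb => simp only [map_add, LinearMap.add_apply, ha, hb]
  | ι_mul y v hy =>
    have hinv : contractLeft d (involute y) = -involute (contractLeft d y) := by
      rw [involute_contractLeft, neg_neg]
    simp only [contractRight_ι_mul, contractLeft_ι_mul, map_add, map_sub, map_smul,
      LinearMap.sub_apply, LinearMap.smul_apply, hy, hinv, smul_neg]
    abel

theorem changeForm_mul_ι (hB : LinearMap.IsSymm B) (h : B.toQuadraticMap = Q' - Q) (m : M)
    (x : CliffordAlgebra Q) :
    changeForm h (x * ι Q m) = changeForm h x * ι Q' m - contractRight (changeForm h x) (B m) := by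
  induction x using CliffordAlgebra.left_induction with
  | algebraMap => simp [Algebra.algebraMap_eq_smul_one, changeForm_ι]
  | add _ _ ha hb =>
    simp only [add_mul, map_add, ha, hb, LinearMap.add_apply]
    abel
  | ι_mul y v hy =>
    rw [mul_assoc, changeForm_ι_mul, hy, changeForm_ι_mul]
    simp only [mul_sub, sub_mul, map_sub, LinearMap.sub_apply, contractLeft_mul_ι,
      contractRight_ι_mul, ← contractRight_contractLeft, mul_assoc]
    rw [show B m v = B v m from hB.eq m v]
    abel

theorem changeForm_reverse (hB : LinearMap.IsSymm B) (h : B.toQuadraticMap = Q' - Q)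
    (x : CliffordAlgebra Q) : changeForm h (reverse x) = reverse (changeForm h x) := by
  induction x using CliffordAlgebra.right_induction with
  | algebraMap => simp [changeForm_algebraMap]
  | add _ _ ha hb => simp only [map_add, ha, hb]
  | mul_ι _ _ hy =>
    rw [reverse.map_mul, reverse_ι, changeForm_ι_mul, hy, changeForm_mul_ι hB, map_sub,
      reverse.map_mul, reverse_ι, contractRight_eq, reverse_reverse]

theorem changeForm_involute (h : B.toQuadraticMap = Q' - Q) (x : CliffordAlgebra Q) :
    changeForm h (involute x) = involute (changeForm h x) := by
  induction x using CliffordAlgebra.left_induction with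
  | algebraMap => simp [changeForm_algebraMap]
  | add _ _ ha hb => simp only [map_add, ha, hb]
  | ι_mul _ _ hy =>
    rw [map_mul, involute_ι, neg_mul, map_neg, changeForm_ι_mul, changeForm_ι_mul, hy,
      map_sub, map_mul, involute_ι, involute_contractLeft, neg_mul, neg_sub_neg]
    abel

variable [Invertible (2 : R)] (Q)

theorem equivExterior_reverse (x : CliffordAlgebra Q) :
    equivExterior Q (reverse x) = reverse (Q := 0) (equivExterior Q x) :=
  changeForm_reverse (QuadraticForm.associated_isSymm R (-Q)) changeForm.associated_neg_proof x

theorem equivExterior_involute (x : CliffordAlgebra Q) :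
    equivExterior Q (involute x) = involute (Q := 0) (equivExterior Q x) :=
  changeForm_involute changeForm.associated_neg_proof x

end CliffordAlgebra

namespace ExteriorAlgebra

open CliffordAlgebra (involute reverse)

variable {R M : Type*} [CommRing R] [AddCommGroup M] [Module R M]

theorem ι_mul_of_mem_exteriorPower {n : ℕ} {x : ExteriorAlgebra R M} (hx : x ∈ ⋀[R]^n M)
    (m : M) : ι R m * x = (-1 : R) ^ n • (x * ι R m) := by
  induction hx using Submodule.pow_induction_on_left' with
  | algebraMap r => simp [Algebra.commutes]
  | add a b i _ _ iha ihb => simp only [mul_add, add_mul, smul_add, iha, ihb]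
  | mem_mul a ha i z hz ihz =>
    obtain ⟨v, rfl⟩ := ha
    rw [← mul_assoc, eq_neg_of_add_eq_zero_left (ι_add_mul_swap m v), neg_mul, mul_assoc, ihz,
      pow_succ, mul_smul_comm, mul_neg_one, neg_smul, mul_assoc]

theorem involute_of_mem_exteriorPower {n : ℕ} {x : ExteriorAlgebra R M} (hx : x ∈ ⋀[R]^n M) :
    involute x = (-1 : R) ^ n • x := by
  induction hx using Submodule.pow_induction_on_left' with
  | algebraMap r => simp
  | add a b i _ _ iha ihb => simp only [map_add, iha, ihb, smul_add]
  | mem_mul a ha i z hz ihz =>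
    obtain ⟨v, rfl⟩ := ha
    rw [map_mul, ihz, CliffordAlgebra.involute_ι, pow_succ, mul_smul_comm, mul_neg_one, neg_smul,
      neg_mul]
    exact smul_neg _ _

theorem reverse_of_mem_exteriorPower {n : ℕ} {x : ExteriorAlgebra R M} (hx : x ∈ ⋀[R]^n M) :
    reverse x = (-1 : R) ^ (n * (n - 1) / 2) • x := by
  induction hx using Submodule.pow_induction_on_right' with
  | algebraMap r => simp
  | add a b i _ _ iha ihb => simp only [map_add, iha, ihb, smul_add]
  | mul_mem i z hz ihz a ha =>
    obtain ⟨v, rfl⟩ := ha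
    have hexp : (i + 1) * (i + 1 - 1) / 2 = i * (i - 1) / 2 + i := by
      rcases i with _ | j
      · rfl
      · rw [Nat.add_sub_cancel, Nat.add_sub_cancel,
          show (j + 1 + 1) * (j + 1) = (j + 1) * j + 2 * (j + 1) by ring,
          Nat.add_mul_div_left _ _ two_pos]
    rw [CliffordAlgebra.reverse.map_mul, CliffordAlgebra.reverse_ι, ihz, mul_smul_comm,
      ι_mul_of_mem_exteriorPower hz, hexp, pow_add, smul_smul]

end ExteriorAlgebra

namespace DirectSum

variable {ι R M : Type*} [DecidableEq ι] [Ring R] [AddCommGroup M] [Module R M]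
  (𝒜 : ι → Submodule R M) [Decomposition 𝒜] {f : M →ₗ[R] M} {c : ι → R}

theorem decompose_map_of_acts_by_smul (hf : ∀ i, ∀ x ∈ 𝒜 i, f x = c i • x) (x : M) (i : ι) :
    (decompose 𝒜 (f x) i : M) = c i • (decompose 𝒜 x i : M) := by
  induction x using Decomposition.inductionOn 𝒜 with
  | zero => simp
  | add x y hx hy => simp only [map_add, decompose_add, DirectSum.add_apply, Submodule.coe_add,
      hx, hy, smul_add]
  | @homogeneous j x =>
    rw [hf j x x.2]
    by_cases hji : j = i
    · subst hji
      rw [decompose_of_mem_same 𝒜 x.2, decompose_of_mem_same 𝒜 (Submodule.smul_mem _ _ x.2)]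
    · rw [decompose_of_mem_ne 𝒜 x.2 hji, decompose_of_mem_ne 𝒜 (Submodule.smul_mem _ _ x.2) hji,
        smul_zero]

theorem decompose_eq_zero_of_map_eq_smul [IsDomain R] [Module.IsTorsionFree R M]
    (hf : ∀ i, ∀ x ∈ 𝒜 i, f x = c i • x) {x : M} {a : R} (hx : f x = a • x) {i : ι}
    (hi : c i ≠ a) : (decompose 𝒜 x i : M) = 0 := by
  have h := congrArg (fun y => (decompose 𝒜 y i : M)) hx
  simp only [decompose_map_of_acts_by_smul 𝒜 hf, decompose_smul, DirectSum.smul_apply,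
    Submodule.coe_smul] at h
  rw [← smul_eq_zero_iff_right (sub_ne_zero.mpr hi), sub_smul, h, sub_self]

end DirectSum

section BilinearForm

variable {R S : Type*} [CommRing R] [AddCommGroup S] [Module R S] {B : S →ₗ[R] S →ₗ[R] R}
  {σ : R}

theorem eq_of_forall_apply_eq_of_nondegenerate (hBnd : ∀ x, (∀ y, B x y = 0) → x = 0)
    (hsym : ∀ x y, B x y = σ * B y x) {u v : S} (h : ∀ y, B y u = B y v) : u = v :=
  sub_eq_zero.mp <| hBnd _ fun y => by
    rw [hsym, map_sub, sub_eq_zero.mpr (h y), mul_zero]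

theorem rankOne_apply_eq_mul_apply_rankOne (hsym : ∀ x y, B x y = σ * B y x)
    {f : Module.End R S} {κ : R} {ξ : S} (hf : ∀ χ, f χ = (κ * B χ ξ) • ξ) (χ₁ χ₂ : S) :
    B (f χ₁) χ₂ = σ * B χ₁ (f χ₂) := by
  simp only [hf, map_smul, LinearMap.smul_apply, smul_eq_mul, hsym ξ χ₂]
  ring

end BilinearForm

open CliffordAlgebra in
theorem stmt_19_general (V S : Type*) [AddCommGroup V] [Module ℝ V]
    [AddCommGroup S] [Module ℝ S]
    (Q : QuadraticForm ℝ V)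
    (γ : CliffordAlgebra Q →ₐ[ℝ] Module.End ℝ S)
    (hγ : Function.Bijective γ)
    (B : S →ₗ[ℝ] S →ₗ[ℝ] ℝ)
    (hBnd : ∀ x : S, (∀ y : S, B x y = 0) → x = 0)
    (σ s : ℝ) (hσ : σ = 1 ∨ σ = -1)
    (hsym : ∀ x y : S, B x y = σ * B y x)
    (hadj : ∀ (x : CliffordAlgebra Q) (ξ₁ ξ₂ : S),
      B (γ x ξ₁) ξ₂ =
        B ξ₁ (γ (if s = 1 then CliffordAlgebra.reverse x
          else CliffordAlgebra.involute (CliffordAlgebra.reverse x)) ξ₂))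
    (α : ExteriorAlgebra ℝ V)
    (hsq : ∃ (ξ : S) (κ : ℝ), (κ = 1 ∨ κ = -1) ∧
      ∀ χ : S, γ ((CliffordAlgebra.equivExterior Q).symm α) χ = (κ * B χ ξ) • ξ)
    (k : ℕ)
    (hkcond : (-1 : ℝ) ^ (k * (k - 1) / 2) *
        (if s = 1 then 1 else (-1 : ℝ) ^ k) = -σ) :
    (DirectSum.decompose (fun i : ℕ => ⋀[ℝ]^i V) α k : ExteriorAlgebra ℝ V) = 0 := by
  obtain ⟨ξ, κ, -, hξ⟩ := hsq
  obtain ⟨x, rfl⟩ := (equivExterior Q).surjective α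
  rw [LinearEquiv.symm_apply_apply] at hξ
  have hself := rankOne_apply_eq_mul_apply_rankOne hsym hξ
  -- `γ x` is `σ`-self-adjoint, and by admissibility its adjoint is `γ` of the twisted reversal
  have hfix : (if s = 1 then reverse x else involute (reverse x)) = σ • x :=
    hγ.injective <| LinearMap.ext fun χ₂ => eq_of_forall_apply_eq_of_nondegenerate hBnd hsym
      fun χ₁ => by rw [← hadj, hself, map_smul, LinearMap.smul_apply, map_smul, smul_eq_mul]
  have hσ_ne : -σ ≠ σ := by rcases hσ with rfl | rfl <;> norm_num
  split_ifs at hfix hkcond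
  · rw [mul_one] at hkcond
    refine DirectSum.decompose_eq_zero_of_map_eq_smul _ (f := reverse)
      (c := fun n => (-1) ^ (n * (n - 1) / 2))
      (fun n _ => ExteriorAlgebra.reverse_of_mem_exteriorPower) ?_ (hkcond ▸ hσ_ne)
    rw [← equivExterior_reverse, hfix, map_smul]
  · refine DirectSum.decompose_eq_zero_of_map_eq_smul _
      (f := involute.toLinearMap ∘ₗ reverse) (c := fun n => (-1) ^ (n * (n - 1) / 2) * (-1) ^ n)
      (fun n y hy => ?_) ?_ (hkcond ▸ hσ_ne)
    · rw [LinearMap.comp_apply, AlgHom.toLinearMap_apply,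
        ExteriorAlgebra.reverse_of_mem_exteriorPower hy, map_smul,
        ExteriorAlgebra.involute_of_mem_exteriorPower hy, smul_smul]
    · rw [LinearMap.comp_apply, AlgHom.toLinearMap_apply, ← equivExterior_reverse,
        ← equivExterior_involute, hfix, map_smul]

/-- let `γ : Cl(V*,h*) ≅ End(Σ)` be an irreducible real Clifford
representation (signature `p - q ≡ 0,2 (mod 8)`, so `γ` is a unital algebra
isomorphism), `B` an admissible pairing of adjoint type `s` and symmetry type `σ`
(i.e. `B(γ(x)ξ₁, ξ₂) = B(ξ₁, γ((π^{(1-s)/2}∘τ)(x)) ξ₂)` and `B(x,y) = σ B(y,x)`).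
If `α ∈ ∧V*` is a signed square of a spinor, i.e. `Ψ_γ(α) = ±ξ ⊗ ξ*`, and `k`
satisfies `(-1)^{k(1-s)/2} (-1)^{k(k-1)/2} = -σ`, then `α⁽ᵏ⁾ = 0`. -/
theorem stmt_19 (V S : Type*) [AddCommGroup V] [Module ℝ V] [FiniteDimensional ℝ V]
    [AddCommGroup S] [Module ℝ S] [FiniteDimensional ℝ S]
    (Q : QuadraticForm ℝ V) (hd : Even (Module.finrank ℝ V))
    (γ : CliffordAlgebra Q →ₐ[ℝ] Module.End ℝ S)
    (hγ : Function.Bijective γ)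
    (hS : Module.finrank ℝ S = 2 ^ (Module.finrank ℝ V / 2))
    (B : S →ₗ[ℝ] S →ₗ[ℝ] ℝ)
    (hBnd : ∀ x : S, (∀ y : S, B x y = 0) → x = 0)
    (σ s : ℝ) (hσ : σ = 1 ∨ σ = -1) (hs : s = 1 ∨ s = -1)
    (hsym : ∀ x y : S, B x y = σ * B y x)
    (hadj : ∀ (x : CliffordAlgebra Q) (ξ₁ ξ₂ : S),
      B (γ x ξ₁) ξ₂ =
        B ξ₁ (γ (if s = 1 then CliffordAlgebra.reverse x
          else CliffordAlgebra.involute (CliffordAlgebra.reverse x)) ξ₂))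
    (α : ExteriorAlgebra ℝ V)
    (hsq : ∃ (ξ : S) (κ : ℝ), (κ = 1 ∨ κ = -1) ∧
      ∀ χ : S, γ ((CliffordAlgebra.equivExterior Q).symm α) χ = (κ * B χ ξ) • ξ)
    (k : ℕ) (hk0 : 1 ≤ k) (hkd : k ≤ Module.finrank ℝ V)
    (hkcond : (-1 : ℝ) ^ (k * (k - 1) / 2) *
        (if s = 1 then 1 else (-1 : ℝ) ^ k) = -σ) :
    (DirectSum.decompose (fun i : ℕ => ⋀[ℝ]^i V) α k : ExteriorAlgebra ℝ V) = 0 :=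
  stmt_19_general V S Q γ hγ B hBnd σ s hσ hsym hadj α hsq k hkcond
end
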